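/- Let X be a totally bounded metric space with modulus of total boundedness α, F ⊆ X, and (x_n) a sequence in X such that: (a) (x_n) is Fejér monotone with respect to F, and (b) for every k ∈ ℕ there is N with x_N within distance 1/(k+1) of some point of the approximation AF_k of F, where (AF_k) is an approximation of F compatible with the Fejér monotonicity in the uniform sense. Then (x_n) is Cauchy. In the special case where F = Argmin(f) for convex lsc proper f on a complete totally bounded CAT(0) space, and (x_n) is the proximal point algorithm with Σγ_n = ∞, the sequence (x_n) is Cauchy and its limit is a minimizer of f. -/

import Mathlib

/-!
Each resolvent step `u = J_γ x` satisfies the variational inequality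
`2γ (f u - f y) + d(x,u)² + d(u,y)² ≤ d(x,y)²`: compare `u` with the points of the geodesic from
`u` to `y`, use the CAT(0) inequality and convexity, and let the point tend to `u`. For `y` a
minimizer this is Fejér monotonicity; summed along the orbit, using that `f` decreases along it,
it gives `f (xₙ) ≤ min f + d(x₀,p)² / (2 ∑ᵢ<ₙ γᵢ) → min f`. By compactness some subsequence
converges, its limit is a minimizer by lower semicontinuity, and Fejér monotonicity with respect
to that limit makes the whole sequence converge to it.
-/

open Filter Topology Set Finset

theorem totallyBounded_of_forall_exists_dist_lt {X : Type*} [PseudoMetricSpace X] {s : Set X}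
    (h : ∀ ε > 0, ∀ u : ℕ → X, (∀ n, u n ∈ s) → ∃ i j, i < j ∧ dist (u i) (u j) < ε) :
    TotallyBounded s := by
  rw [Metric.totallyBounded_iff]
  intro ε hε
  by_contra! hcover
  obtain ⟨u, hu⟩ := seq_of_forall_finite_exists fun t ht => not_subset.1 (hcover t ht)
  obtain ⟨i, j, hij, hd⟩ := h ε hε u fun n => (hu n).1
  exact (hu j).2 (mem_iUnion₂.2 ⟨u i, mem_image_of_mem u hij, by rwa [Metric.mem_ball, dist_comm]⟩)

theorem totallyBounded_univ_of_modulus {X : Type*} [PseudoMetricSpace X] (α : ℕ → ℕ)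
    (hα : ∀ k : ℕ, ∀ u : ℕ → X,
      ∃ i j : ℕ, i < j ∧ j ≤ α k ∧ dist (u i) (u j) ≤ 1 / ((k : ℝ) + 1)) :
    TotallyBounded (univ : Set X) := by
  refine totallyBounded_of_forall_exists_dist_lt fun ε hε u _ => ?_
  obtain ⟨k, hk⟩ := exists_nat_one_div_lt hε
  obtain ⟨i, j, hij, -, hd⟩ := hα k u
  exact ⟨i, j, hij, hd.trans_lt hk⟩

theorem tendsto_of_antitone_dist_of_subseq {X : Type*} [PseudoMetricSpace X] {x : ℕ → X} {z : X}
    {φ : ℕ → ℕ} (hx : Antitone fun n => dist (x n) z) (hφ : StrictMono φ)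
    (hxφ : Tendsto (x ∘ φ) atTop (𝓝 z)) : Tendsto x atTop (𝓝 z) := by
  rw [tendsto_iff_dist_tendsto_zero] at hxφ ⊢
  exact (tendsto_iff_tendsto_subseq_of_antitone hx hφ.tendsto_atTop).2 hxφ

theorem LowerSemicontinuous.le_of_tendsto {α β ι : Type*} [TopologicalSpace α] [LinearOrder β]
    [TopologicalSpace β] [OrderTopology β] [DenselyOrdered β] {f : α → β}
    (hf : LowerSemicontinuous f) {l : Filter ι} [l.NeBot] {x : ι → α} {z : α} {m : β}
    (hx : Tendsto x l (𝓝 z)) (hfx : Tendsto (f ∘ x) l (𝓝 m)) : f z ≤ m := by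
  by_contra! h
  obtain ⟨C, hmC, hCz⟩ := exists_between h
  obtain ⟨n, hCn, hnC⟩ :=
    ((hx.eventually (hf z C hCz)).and (hfx.eventually (gt_mem_nhds hmC))).exists
  exact hCn.not_gt hnC

theorem tendsto_zero_of_antitone_of_mul_le_sub {a γ D : ℕ → ℝ} (ha₀ : ∀ n, 0 ≤ a n)
    (ha : Antitone a) (hγ : ∀ n, 0 ≤ γ n)
    (hdiv : Tendsto (fun N => ∑ i ∈ range N, γ i) atTop atTop) (hD : ∀ n, 0 ≤ D n)
    (hstep : ∀ n, γ n * a n ≤ D n - D (n + 1)) : Tendsto a atTop (𝓝 0) := by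
  have hbound : ∀ N, (∑ i ∈ range N, γ i) * a N ≤ D 0 := fun N =>
    calc (∑ i ∈ range N, γ i) * a N = ∑ i ∈ range N, γ i * a N := Finset.sum_mul _ _ _
      _ ≤ ∑ i ∈ range N, (D i - D (i + 1)) := Finset.sum_le_sum fun i hi =>
          (mul_le_mul_of_nonneg_left (ha (mem_range.1 hi).le) (hγ i)).trans (hstep i)
      _ = D 0 - D N := Finset.sum_range_sub' D N
      _ ≤ D 0 := sub_le_self _ (hD N)
  refine tendsto_of_tendsto_of_tendsto_of_le_of_le' tendsto_const_nhds
    ((tendsto_const_nhds (x := D 0)).div_atTop hdiv) (Eventually.of_forall ha₀) ?_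
  filter_upwards [hdiv.eventually_gt_atTop 0] with N hN
  rw [le_div_iff₀ hN, mul_comm]
  exact hbound N

section ProximalPoint

variable {X : Type*} [MetricSpace X]

def CAT0Inequality (w : X → X → ℝ → X) : Prop :=
  ∀ x y z : X, ∀ t ∈ Icc (0 : ℝ) 1,
    dist z (w x y t) ^ 2 ≤ (1 - t) * dist z x ^ 2 + t * dist z y ^ 2 - t * (1 - t) * dist x y ^ 2

def ConvexAlong (w : X → X → ℝ → X) (f : X → EReal) : Prop :=
  ∀ x y : X, ∀ t ∈ Icc (0 : ℝ) 1,
    f (w x y t) ≤ ((1 - t : ℝ) : EReal) * f x + ((t : ℝ) : EReal) * f y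

def IsProximalPoint (f : X → EReal) (γ : ℝ) (x u : X) : Prop :=
  ∀ y, f u + ((1 / (2 * γ) * dist x u ^ 2 : ℝ) : EReal) ≤
    f y + ((1 / (2 * γ) * dist x y ^ 2 : ℝ) : EReal)

variable {f : X → EReal} {γ : ℝ} {x u : X}

theorem IsProximalPoint.ne_top (hu : IsProximalPoint f γ x u) {y : X} (hy : f y ≠ ⊤) :
    f u ≠ ⊤ := by
  intro htop
  have h := hu y
  rw [htop, EReal.top_add_coe, top_le_iff] at h
  exact (EReal.add_lt_top hy (EReal.coe_ne_top _)).ne h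

theorem IsProximalPoint.le_self (hu : IsProximalPoint f γ x u) (hγ : 0 ≤ γ) : f u ≤ f x :=
  calc f u ≤ f u + ((1 / (2 * γ) * dist x u ^ 2 : ℝ) : EReal) :=
        le_add_of_nonneg_right (EReal.coe_nonneg.2 (by positivity))
    _ ≤ f x + ((1 / (2 * γ) * dist x x ^ 2 : ℝ) : EReal) := hu x
    _ = f x := by simp

theorem IsProximalPoint.variational_ineq {w : X → X → ℝ → X} {y : X} {a b : ℝ}
    (hcat : CAT0Inequality w) (hconv : ConvexAlong w f)
    (hu : IsProximalPoint f γ x u) (hγ : 0 < γ) (ha : f u = a) (hb : f y = b) :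
    2 * γ * (a - b) + dist x u ^ 2 + dist u y ^ 2 ≤ dist x y ^ 2 := by
  set c := 1 / (2 * γ)
  have hc : 0 < c := by positivity
  have hgeodesic : ∀ t ∈ Ioo (0 : ℝ) 1,
      a - b ≤ c * (dist x y ^ 2 - dist x u ^ 2 - dist u y ^ 2) + t * (c * dist u y ^ 2) := by
    intro t ht
    have htI : t ∈ Icc (0 : ℝ) 1 := Ioo_subset_Icc_self ht
    have hfw : f (w u y t) ≤ (((1 - t) * a + t * b : ℝ) : EReal) := by
      have h := hconv u y t htI
      rw [ha, hb] at h
      exact_mod_cast h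
    have hdw := mul_le_mul_of_nonneg_left (hcat u y x t htI) hc.le
    have hcmp : a + c * dist x u ^ 2 ≤ (1 - t) * a + t * b +
        c * ((1 - t) * dist x u ^ 2 + t * dist x y ^ 2 - t * (1 - t) * dist u y ^ 2) := by
      have h := (hu (w u y t)).trans (add_le_add hfw (EReal.coe_le_coe_iff.2 hdw))
      rw [ha] at h
      exact_mod_cast h
    refine le_of_mul_le_mul_left ?_ ht.1
    linear_combination hcmp
  have hlim : Tendsto
      (fun t => c * (dist x y ^ 2 - dist x u ^ 2 - dist u y ^ 2) + t * (c * dist u y ^ 2)) (𝓝[>] 0)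
      (𝓝 (c * (dist x y ^ 2 - dist x u ^ 2 - dist u y ^ 2))) :=
    tendsto_nhdsWithin_of_tendsto_nhds (Continuous.tendsto' (by fun_prop) _ _ (by simp))
  have hab := ge_of_tendsto hlim (by filter_upwards [Ioo_mem_nhdsGT one_pos] using hgeodesic)
  have h2γc : 2 * γ * c = 1 := by simp only [c]; field_simp
  calc 2 * γ * (a - b) + dist x u ^ 2 + dist u y ^ 2
      ≤ 2 * γ * (c * (dist x y ^ 2 - dist x u ^ 2 - dist u y ^ 2)) + dist x u ^ 2 + dist u y ^ 2 :=
        by gcongr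
    _ = dist x y ^ 2 := by rw [← mul_assoc, h2γc]; ring

theorem IsProximalPoint.dist_le_of_forall_le {w : X → X → ℝ → X}
    (hcat : CAT0Inequality w) (hconv : ConvexAlong w f)
    (hbot : ∀ x, f x ≠ ⊥) (hu : IsProximalPoint f γ x u) (hγ : 0 < γ) {z : X}
    (hz : ∀ y, f z ≤ f y) (hz_top : f z ≠ ⊤) : dist u z ≤ dist x z := by
  have hfu := (EReal.coe_toReal (hu.ne_top hz_top) (hbot u)).symm
  have hfz := (EReal.coe_toReal hz_top (hbot z)).symm
  have hle : (f z).toReal ≤ (f u).toReal :=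
    EReal.toReal_le_toReal (hz u) (hbot z) (hu.ne_top hz_top)
  have h := hu.variational_ineq hcat hconv hγ hfu hfz
  refine (pow_le_pow_iff_left₀ dist_nonneg dist_nonneg two_ne_zero).1 ?_
  nlinarith [sq_nonneg (dist x u)]

theorem tendsto_proximalPoint_values {w : X → X → ℝ → X}
    (hcat : CAT0Inequality w) (hconv : ConvexAlong w f)
    (hbot : ∀ x, f x ≠ ⊥) {γ : ℕ → ℝ} (hγ : ∀ n, 0 < γ n)
    (hdiv : Tendsto (fun N => ∑ i ∈ range N, γ i) atTop atTop) {x : ℕ → X}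
    (hx : ∀ n, IsProximalPoint f (γ n) (x n) (x (n + 1))) {p : X} (hp : ∀ y, f p ≤ f y)
    (hp_top : f p ≠ ⊤) : Tendsto (fun n => f (x n)) atTop (𝓝 (f p)) := by
  set v : ℕ → ℝ := fun n => (f (x (n + 1))).toReal
  have hv : ∀ n, f (x (n + 1)) = v n := fun n =>
    (EReal.coe_toReal ((hx n).ne_top hp_top) (hbot _)).symm
  have hp_eq := (EReal.coe_toReal hp_top (hbot p)).symm
  set m := (f p).toReal
  have hvm : Tendsto (fun n => v n - m) atTop (𝓝 0) := by
    refine tendsto_zero_of_antitone_of_mul_le_sub (D := fun n => dist (x n) p ^ 2 / 2)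
      (fun n => sub_nonneg.2 ?_) (antitone_nat_of_succ_le fun n => sub_le_sub_right ?_ m)
      (fun n => (hγ n).le) hdiv (fun n => by positivity) fun n => ?_
    · exact EReal.toReal_le_toReal (hp _) (hbot p) ((hx n).ne_top hp_top)
    · exact EReal.toReal_le_toReal ((hx (n + 1)).le_self (hγ _).le) (hbot _) ((hx n).ne_top hp_top)
    · have h := (hx n).variational_ineq hcat hconv (hγ n) (hv n) hp_eq
      nlinarith [sq_nonneg (dist (x n) (x (n + 1)))]
  have hcoe : Tendsto (fun n => ((v n : ℝ) : EReal)) atTop (𝓝 (f p)) := by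
    rw [hp_eq]
    exact (continuous_coe_real_ereal.tendsto m).comp (by simpa using hvm.add_const m)
  rw [← funext hv] at hcoe
  exact (tendsto_add_atTop_iff_nat 1).1 hcoe

end ProximalPoint

theorem stmt18_general
    {X : Type*} [MetricSpace X] [CompleteSpace X]
    -- geodesic convex-combination structure: `w x y t` is the point `(1-t)x + ty`
    (w : X → X → ℝ → X)
    -- the CAT(0) inequality
    (hcat : ∀ x y z : X, ∀ t ∈ Set.Icc (0:ℝ) 1,
      dist z (w x y t)^2 ≤ (1-t) * dist z x^2 + t * dist z y^2 - t*(1-t) * dist x y^2)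
    (f : X → EReal)
    -- f is convex, lower semicontinuous and proper (never -∞, somewhere finite)
    (hconv : ∀ x y : X, ∀ t ∈ Set.Icc (0:ℝ) 1,
      f (w x y t) ≤ ((1 - t : ℝ) : EReal) * f x + ((t : ℝ) : EReal) * f y)
    (hlsc : LowerSemicontinuous f)
    (hproper : ∃ x, f x ≠ ⊤) (hbot : ∀ x, f x ≠ ⊥)
    -- J is the resolvent: J γ x minimizes y ↦ f(y) + (1/(2γ)) d(x,y)², uniquely
    (J : ℝ → X → X)
    (hJ : ∀ γ : ℝ, 0 < γ → ∀ x y : X,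
      f (J γ x) + ((1/(2*γ) * dist x (J γ x)^2 : ℝ) : EReal) ≤
        f y + ((1/(2*γ) * dist x y^2 : ℝ) : EReal))
    -- X is totally bounded, with modulus of total boundedness α
    (α : ℕ → ℕ)
    (hα : ∀ k : ℕ, ∀ u : ℕ → X,
      ∃ i j : ℕ, i < j ∧ j ≤ α k ∧ dist (u i) (u j) ≤ 1 / ((k:ℝ)+1))
    (hmin : ∃ p : X, ∀ y, f p ≤ f y)
    (γseq : ℕ → ℝ) (hγseq : ∀ n, 0 < γseq n)
    (hdiv : Filter.Tendsto (fun N => ∑ i ∈ Finset.range N, γseq i)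
      Filter.atTop Filter.atTop)
    (x : ℕ → X)
    (hxs : ∀ n, x (n+1) = J (γseq n) (x n)) :
    CauchySeq x ∧
      ∃ z : X, Filter.Tendsto x Filter.atTop (nhds z) ∧ ∀ y, f z ≤ f y := by
  obtain ⟨p, hp⟩ := hmin
  have hp_top : f p ≠ ⊤ := by
    obtain ⟨y, hy⟩ := hproper
    exact ne_top_of_le_ne_top hy (hp y)
  have hprox : ∀ n, IsProximalPoint f (γseq n) (x n) (x (n + 1)) := fun n =>
    hxs n ▸ hJ _ (hγseq n) (x n)
  have : CompactSpace X := ⟨isCompact_iff_totallyBounded_isComplete.2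
    ⟨totallyBounded_univ_of_modulus α hα, isComplete_univ⟩⟩
  obtain ⟨z, φ, hφ, hxφ⟩ := CompactSpace.tendsto_subseq x
  have hfx := tendsto_proximalPoint_values hcat hconv hbot hγseq hdiv hprox hp hp_top
  have hz : ∀ y, f z ≤ f y := fun y =>
    (hlsc.le_of_tendsto hxφ (hfx.comp hφ.tendsto_atTop)).trans (hp y)
  have hz_top : f z ≠ ⊤ := ne_top_of_le_ne_top hp_top (hz p)
  have hxz : Tendsto x atTop (𝓝 z) := tendsto_of_antitone_dist_of_subseq
    (antitone_nat_of_succ_le fun n =>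
      (hprox n).dist_le_of_forall_le hcat hconv hbot (hγseq n) hz hz_top) hφ hxφ
  exact ⟨hxz.cauchySeq, z, hxz, hz⟩

/-- In a complete totally bounded CAT(0) space (with modulus of
total boundedness α), the proximal point algorithm for a convex lsc proper
function f with Argmin(f) ≠ ∅ and Σγₙ = ∞ is Cauchy (being Fejér monotone with
respect to Argmin(f) and having approximate minimizers), and its limit is a
minimizer of f. -/
theorem stmt18
    {X : Type*} [MetricSpace X] [CompleteSpace X]
    -- geodesic convex-combination structure: `w x y t` is the point `(1-t)x + ty`
    (w : X → X → ℝ → X)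
    (hw1 : ∀ x y : X, ∀ t ∈ Set.Icc (0:ℝ) 1, dist x (w x y t) = t * dist x y)
    (hw2 : ∀ x y : X, ∀ t ∈ Set.Icc (0:ℝ) 1, dist y (w x y t) = (1-t) * dist x y)
    -- the CAT(0) inequality
    (hcat : ∀ x y z : X, ∀ t ∈ Set.Icc (0:ℝ) 1,
      dist z (w x y t)^2 ≤ (1-t) * dist z x^2 + t * dist z y^2 - t*(1-t) * dist x y^2)
    (f : X → EReal)
    -- f is convex, lower semicontinuous and proper (never -∞, somewhere finite)
    (hconv : ∀ x y : X, ∀ t ∈ Set.Icc (0:ℝ) 1,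
      f (w x y t) ≤ ((1 - t : ℝ) : EReal) * f x + ((t : ℝ) : EReal) * f y)
    (hlsc : LowerSemicontinuous f)
    (hproper : ∃ x, f x ≠ ⊤) (hbot : ∀ x, f x ≠ ⊥)
    -- J is the resolvent: J γ x minimizes y ↦ f(y) + (1/(2γ)) d(x,y)², uniquely
    (J : ℝ → X → X)
    (hJ : ∀ γ : ℝ, 0 < γ → ∀ x y : X,
      f (J γ x) + ((1/(2*γ) * dist x (J γ x)^2 : ℝ) : EReal) ≤
        f y + ((1/(2*γ) * dist x y^2 : ℝ) : EReal))
    (hJuniq : ∀ γ : ℝ, 0 < γ → ∀ x m : X,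
      (∀ y, f m + ((1/(2*γ) * dist x m^2 : ℝ) : EReal) ≤
        f y + ((1/(2*γ) * dist x y^2 : ℝ) : EReal)) → m = J γ x)
    -- X is totally bounded, with modulus of total boundedness α
    (α : ℕ → ℕ)
    (hα : ∀ k : ℕ, ∀ u : ℕ → X,
      ∃ i j : ℕ, i < j ∧ j ≤ α k ∧ dist (u i) (u j) ≤ 1 / ((k:ℝ)+1))
    (hmin : ∃ p : X, ∀ y, f p ≤ f y)
    (γseq : ℕ → ℝ) (hγseq : ∀ n, 0 < γseq n)
    (hdiv : Filter.Tendsto (fun N => ∑ i ∈ Finset.range N, γseq i)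
      Filter.atTop Filter.atTop)
    (x0 : X) (x : ℕ → X) (hx0 : x 0 = x0)
    (hxs : ∀ n, x (n+1) = J (γseq n) (x n)) :
    CauchySeq x ∧
      ∃ z : X, Filter.Tendsto x Filter.atTop (nhds z) ∧ ∀ y, f z ≤ f y :=
  stmt18_general w hcat f hconv hlsc hproper hbot J hJ α hα hmin γseq hγseq hdiv x hxs
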